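/- Let x be a real irrational root of x² + px + q = 0 with p, q ∈ ℤ. Then the period of the continued fraction expansion of x, viewed as a cyclic sequence, is a palindrome: it is symmetric about some point (either an element of the cycle or between two elements). -/

import Mathlib

/-- The sequence of complete quotients of the continued fraction algorithm. -/
noncomputable def cq (x : ℝ) : ℕ → ℝ
  | 0 => x
  | n + 1 => (Int.fract (cq x n))⁻¹

/-- The `n`-th digit of the continued fraction expansion of `x`. -/
noncomputable def cfDigit (x : ℝ) (n : ℕ) : ℤ := ⌊cq x n⌋

/-- `b` is a period of the (eventually periodic) continued fraction of `x`. -/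
def IsCFPeriod (x : ℝ) (b : List ℤ) : Prop :=
  b ≠ [] ∧ ∃ N : ℕ, ∀ i : ℕ, cfDigit x (N + i) = b.getD (i % b.length) 0

/-- `b` is a minimal period of the continued fraction of `x`. -/
def IsMinCFPeriod (x : ℝ) (b : List ℤ) : Prop :=
  IsCFPeriod x b ∧ ∀ c : List ℤ, IsCFPeriod x c → b.length ≤ c.length

/-!
Let `x' = -p - x` be the conjugate of `x`. Replacing `x` by `-x` if necessary (their expansions
share a tail), we may assume `x' < x`; then `x - x' = √(p² - 4q) > 2`. Hence the conjugates
`ηₙ` of the complete quotients `xₙ` lie in `(-1, 0)` for `n ≥ 1`, and `zₙ = -1/η_{n+1} > 1` satisfies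
`z_{n+1} = a_{n+1} + 1/zₙ`: the expansion of `zₙ` reads `aₙ, …, a₁` and then continues with the
expansion of `z₀ = x + ⌊x⌋ + p`. Once the complete quotients of `x` repeat with period `k`, so do the
`zₙ`, and then `z_N` has purely periodic expansion with the reversed period while its tail is that of
`x`. Two periods of equal length of one expansion are rotations of each other.
-/

open IntermediateField Polynomial Set

lemma cq_add (x : ℝ) (m n : ℕ) : cq x (m + n) = cq (cq x m) n := by
  induction n with
  | zero => rfl
  | succ n ih => rw [← Nat.add_assoc, cq, ih]; rfl

lemma cfDigit_add (x : ℝ) (m n : ℕ) : cfDigit x (m + n) = cfDigit (cq x m) n := by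
  rw [cfDigit, cfDigit, cq_add]

lemma cq_one (x : ℝ) : cq x 1 = (Int.fract x)⁻¹ := rfl

lemma cq_one_intCast_add (a : ℤ) (x : ℝ) : cq (a + x) 1 = cq x 1 := by
  rw [cq_one, cq_one, Int.fract_intCast_add]

lemma floor_intCast_add_inv (a : ℤ) {y : ℝ} (hy : 1 < y) : ⌊(a + y⁻¹ : ℝ)⌋ = a := by
  rw [Int.floor_intCast_add, Int.floor_eq_zero_iff.2 ⟨by positivity, inv_lt_one_of_one_lt₀ hy⟩,
    add_zero]

lemma cq_one_intCast_add_inv (a : ℤ) {y : ℝ} (hy : 1 < y) : cq (a + y⁻¹) 1 = y := by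
  rw [cq_one_intCast_add, cq_one,
    Int.fract_eq_self.2 ⟨by positivity, inv_lt_one_of_one_lt₀ hy⟩, inv_inv]

lemma Irrational.fract {x : ℝ} (hx : Irrational x) : Irrational (Int.fract x) :=
  hx.sub_intCast _

lemma Irrational.fract_pos {x : ℝ} (hx : Irrational x) : 0 < Int.fract x :=
  (Int.fract_nonneg x).lt_of_ne hx.fract.ne_zero.symm

lemma irrational_cq {x : ℝ} (hx : Irrational x) (n : ℕ) : Irrational (cq x n) := by
  induction n with
  | zero => exact hx
  | succ n ih => exact ih.fract.inv

lemma one_lt_cq {x : ℝ} (hx : Irrational x) (n : ℕ) : 1 < cq x (n + 1) :=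
  (one_lt_inv₀ (irrational_cq hx n).fract_pos).2 (Int.fract_lt_one _)

lemma one_le_cfDigit {x : ℝ} (hx : Irrational x) (n : ℕ) : 1 ≤ cfDigit x (n + 1) :=
  Int.le_floor.2 (mod_cast (one_lt_cq hx n).le)

open GenContFract in
lemma stream_eq_some_cq {x : ℝ} (hx : Irrational x) (n : ℕ) :
    IntFractPair.stream x n = some (IntFractPair.of (cq x n)) := by
  induction n generalizing x with
  | zero => rfl
  | succ n ih =>
    rw [IntFractPair.stream_succ hx.fract.ne_zero, add_comm, cq_add]
    exact ih (irrational_cq hx 1)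

open GenContFract in
lemma eq_of_cfDigit_eq {x y : ℝ} (hx : Irrational x) (hy : Irrational y)
    (h : ∀ n, cfDigit x n = cfDigit y n) : x = y := by
  have hof : GenContFract.of x = GenContFract.of y := by
    refine GenContFract.ext (by rw [of_h_eq_floor, of_h_eq_floor]; exact congrArg _ (h 0)) ?_
    refine Stream'.Seq.ext fun n => ?_
    rw [get?_of_eq_some_of_succ_get?_intFractPair_stream (stream_eq_some_cq hx (n + 1)),
      get?_of_eq_some_of_succ_get?_intFractPair_stream (stream_eq_some_cq hy (n + 1))]
    exact congrArg _ (congrArg _ (congrArg _ (h (n + 1))))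
  exact tendsto_nhds_unique (of_convergence x) (hof ▸ of_convergence y)

/- If `x = [a₀; a₁, a₂, …]` then `-x = [-a₀ - 1; 1, a₁ - 1, a₂, …]` when `a₁ ≥ 2`, and
`-x = [-a₀ - 1; a₂ + 1, a₃, …]` when `a₁ = 1`. -/
lemma exists_cq_neg_eq {x : ℝ} (hx : Irrational x) : ∃ s t, cq (-x) s = cq x t := by
  set y := cq x 1 with hy_def
  have hy : 1 < y := one_lt_cq hx 0
  have hneg : cq (-x) 1 = ((1 : ℤ) : ℝ) + (y - 1)⁻¹ := by
    have hf := hx.fract_pos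
    have hf1 := Int.fract_lt_one x
    rw [cq_one, Int.fract_neg hx.fract.ne_zero, hy_def, cq_one]
    push_cast
    field_simp
    ring
  have hy2 : y ≠ 2 := fun h => (irrational_cq hx 1).ne_nat 2 (by rw [← hy_def, h]; norm_num)
  rcases hy2.lt_or_gt with hlt | hgt
  · refine ⟨2, 3, ?_⟩
    have hfract : Int.fract y = y - 1 := by
      rw [← Int.fract_sub_one]; exact Int.fract_eq_self.2 ⟨by linarith, by linarith⟩
    rw [cq_add (-x) 1 1, hneg, ← hfract, cq_one_intCast_add,
      show (Int.fract y)⁻¹ = cq x 2 from rfl, ← cq_add]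
  · refine ⟨3, 2, ?_⟩
    have h2 : cq (-x) 2 = y - 1 := by
      rw [cq_add (-x) 1 1, hneg, cq_one_intCast_add_inv 1 (by linarith)]
    rw [cq_add (-x) 2 1, h2, show y - 1 = ((-1 : ℤ) : ℝ) + y by push_cast; ring,
      cq_one_intCast_add, ← cq_add]

def periodicExt (b : List ℤ) (i : ℕ) : ℤ := b.getD (i % b.length) 0

lemma periodicExt_add_length_mul (b : List ℤ) (i t : ℕ) :
    periodicExt b (i + b.length * t) = periodicExt b i := by
  rw [periodicExt, Nat.add_mul_mod_self_left]; rfl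

lemma periodicExt_rotate (b : List ℤ) (r i : ℕ) :
    periodicExt (b.rotate r) i = periodicExt b (i + r) := by
  rcases Nat.eq_zero_or_pos b.length with h0 | hb
  · simp [periodicExt, List.length_eq_zero_iff.1 h0]
  simp only [periodicExt, List.length_rotate, List.getD_eq_getElem?_getD,
    List.getElem?_rotate (Nat.mod_lt i hb), Nat.mod_add_mod]

lemma periodicExt_reverse (b : List ℤ) (j : ℕ) :
    periodicExt b.reverse j = periodicExt b (b.length * (j + 1) - 1 - j) := by
  rcases Nat.eq_zero_or_pos b.length with h0 | hb
  · simp [periodicExt, List.length_eq_zero_iff.1 h0]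
  have hmod : (b.length * (j + 1) - 1 - j) % b.length = b.length - 1 - j % b.length := by
    have hj := Nat.div_add_mod j b.length
    have hr := Nat.mod_lt j hb
    have hq : j / b.length ≤ j := Nat.div_le_self j b.length
    have h1 := Nat.mul_sub b.length j (j / b.length)
    have h2 := Nat.mul_le_mul_left b.length hq
    rw [show b.length * (j + 1) - 1 - j =
        (b.length - 1 - j % b.length) + b.length * (j - j / b.length) by rw [Nat.mul_add]; omega]
    rw [Nat.add_mul_mod_self_left, Nat.mod_eq_of_lt (by omega)]
  simp only [periodicExt, List.length_reverse, List.getD_eq_getElem?_getD, hmod,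
    List.getElem?_reverse (Nat.mod_lt j hb)]

lemma eq_of_periodicExt_eq {b c : List ℤ} (hlen : b.length = c.length)
    (h : ∀ i, periodicExt b i = periodicExt c i) : b = c := by
  refine List.ext_getElem hlen fun i hb hc => ?_
  have := h i
  rw [periodicExt, periodicExt, ← hlen, Nat.mod_eq_of_lt hb, List.getD_eq_getElem _ _ hb,
    List.getD_eq_getElem _ _ hc] at this
  exact this

lemma isRotated_of_periodicExt {f : ℕ → ℤ} {b c : List ℤ} {M N : ℕ}
    (hlen : b.length = c.length) (hb : ∀ i, f (M + i) = periodicExt b i)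
    (hc : ∀ i, f (N + i) = periodicExt c i) : b ~r c := by
  rcases Nat.eq_zero_or_pos b.length with h0 | hpos
  · rw [List.length_eq_zero_iff.1 h0, List.length_eq_zero_iff.1 (hlen.symm.trans h0)]
  refine ⟨N + (b.length - 1) * M, eq_of_periodicExt_eq (by simp [hlen]) fun i => ?_⟩
  rw [periodicExt_rotate, ← hb, ← periodicExt_add_length_mul c i M, ← hc, ← hlen]
  congr 1
  have := Nat.sub_one_mul b.length M
  have := Nat.le_mul_of_pos_left M hpos
  omega

lemma isCFPeriod_iff {x : ℝ} {b : List ℤ} :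
    IsCFPeriod x b ↔ b ≠ [] ∧ ∃ N, ∀ i, cfDigit x (N + i) = periodicExt b i := Iff.rfl

lemma IsCFPeriod.of_cq_eq {x y : ℝ} {b : List ℤ} {s t : ℕ} (hb : IsCFPeriod x b)
    (h : cq y s = cq x t) : IsCFPeriod y b := by
  obtain ⟨hne, N, hN⟩ := isCFPeriod_iff.1 hb
  refine isCFPeriod_iff.2 ⟨hne, s + (N + (b.length - 1) * t), fun i => ?_⟩
  have hpos := List.length_pos_iff.2 hne
  have hidx : t + (N + (b.length - 1) * t + i) = N + (i + b.length * t) := by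
    have := Nat.sub_one_mul b.length t
    have := Nat.le_mul_of_pos_left t hpos
    omega
  rw [add_assoc, cfDigit_add, h, ← cfDigit_add, hidx, hN, periodicExt_add_length_mul]

lemma cq_add_length_of_cfDigit {x : ℝ} (hx : Irrational x) {b : List ℤ} {N : ℕ}
    (hN : ∀ i, cfDigit x (N + i) = periodicExt b i) {n : ℕ} (hn : N ≤ n) :
    cq x (n + b.length) = cq x n := by
  refine eq_of_cfDigit_eq (irrational_cq hx _) (irrational_cq hx _) fun j => ?_
  obtain ⟨m, rfl⟩ := Nat.exists_eq_add_of_le hn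
  rw [← cfDigit_add, ← cfDigit_add, add_assoc N m j,
    show N + m + b.length + j = N + (m + j + b.length * 1) by ring, hN, hN,
    periodicExt_add_length_mul]

lemma IsCFPeriod.isRotated {x : ℝ} {b c : List ℤ} (hb : IsCFPeriod x b) (hc : IsCFPeriod x c)
    (hlen : b.length = c.length) : b ~r c := by
  obtain ⟨-, M, hM⟩ := isCFPeriod_iff.1 hb
  obtain ⟨-, N, hN⟩ := isCFPeriod_iff.1 hc
  exact isRotated_of_periodicExt hlen hM hN

lemma cq_eq_of_backward_rec {d : ℕ → ℤ} {z : ℕ → ℝ} (hz : ∀ n, 1 < z n)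
    (hrec : ∀ n, z (n + 1) = d n + (z n)⁻¹) (n m : ℕ) : cq (z (n + m)) m = z n := by
  induction m generalizing n with
  | zero => rfl
  | succ m ih =>
    rw [cq_add, ← add_assoc, add_right_comm, ih, hrec, cq_one_intCast_add_inv _ (hz n)]

lemma cfDigit_eq_of_backward_rec {d : ℕ → ℤ} {z : ℕ → ℝ} (hz : ∀ n, 1 < z n)
    (hrec : ∀ n, z (n + 1) = d n + (z n)⁻¹) (n m : ℕ) : cfDigit (z (n + 1 + m)) m = d n := by
  rw [cfDigit, cq_eq_of_backward_rec hz hrec, hrec, floor_intCast_add_inv _ (hz n)]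

lemma isCFPeriod_reverse_of_backward_rec {d : ℕ → ℤ} {z : ℕ → ℝ} (hz : ∀ n, 1 < z n)
    (hrec : ∀ n, z (n + 1) = d n + (z n)⁻¹) {b : List ℤ} (hb : b ≠ []) {N : ℕ}
    (hd : ∀ i, d (N + i) = periodicExt b i) (hper : ∀ n, N ≤ n → z (n + b.length) = z n) :
    IsCFPeriod (z N) b.reverse := by
  refine isCFPeriod_iff.2 ⟨List.reverse_ne_nil_iff.2 hb, 0, fun j => ?_⟩
  have hiter : ∀ t, z (N + b.length * t) = z N := by
    intro t
    induction t with
    | zero => rfl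
    | succ t ih => rw [Nat.mul_succ, ← add_assoc, hper _ (Nat.le_add_right _ _), ih]
  have hidx : N + b.length * (j + 1) = N + (b.length * (j + 1) - 1 - j) + 1 + j := by
    have := Nat.le_mul_of_pos_left (j + 1) (List.length_pos_iff.2 hb)
    omega
  rw [zero_add, ← hiter (j + 1), hidx, cfDigit_eq_of_backward_rec hz hrec, hd, periodicExt_reverse]

lemma minpoly_eq_of_irrational {f : ℚ[X]} (hf : f.Monic) (hdeg : f.natDegree = 2) {x : ℝ}
    (hx : Irrational x) (hfx : aeval x f = 0) : minpoly ℚ x = f := by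
  have hint : IsIntegral ℚ x := ⟨f, hf, hfx⟩
  have hdvd : minpoly ℚ x ∣ f := minpoly.dvd ℚ x hfx
  have hdeg2 : 2 ≤ (minpoly ℚ x).natDegree :=
    (minpoly.two_le_natDegree_iff hint).2 fun ⟨r, hr⟩ => hx ⟨r, hr⟩
  exact eq_of_dvd_of_natDegree_le_of_leadingCoeff hdvd (hdeg ▸ hdeg2)
    ((minpoly.monic hint).leadingCoeff.trans hf.leadingCoeff.symm)

lemma exists_algHom_adjoin_apply_gen {f : ℚ[X]} (hf : f.Monic) (hdeg : f.natDegree = 2)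
    {x y : ℝ} (hx : Irrational x) (hfx : aeval x f = 0) (hfy : aeval y f = 0) :
    ∃ σ : ℚ⟮x⟯ →ₐ[ℚ] ℝ, σ (AdjoinSimple.gen ℚ x) = y := by
  have hint : IsIntegral ℚ x := ⟨f, hf, hfx⟩
  have hy : y ∈ (minpoly ℚ x).aroots ℝ := by
    rw [minpoly_eq_of_irrational hf hdeg hx hfx, mem_aroots]
    exact ⟨hf.ne_zero, hfy⟩
  exact ⟨_, algHomAdjoinIntegralEquiv_symm_apply_gen ℚ hint ⟨y, hy⟩⟩

lemma cq_mem_adjoin (x : ℝ) (n : ℕ) : cq x n ∈ ℚ⟮x⟯ := by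
  induction n with
  | zero => exact mem_adjoin_simple_self ℚ x
  | succ n ih => exact inv_mem (sub_mem ih (intCast_mem _ _))

section Conjugate

variable {x : ℝ} (σ : ℚ⟮x⟯ →ₐ[ℚ] ℝ)

/-- The image under `σ` of the `n`-th complete quotient; for the nontrivial embedding `σ` this is
its Galois conjugate. -/
noncomputable def conjCQ (n : ℕ) : ℝ := σ ⟨cq x n, cq_mem_adjoin x n⟩

lemma conjCQ_zero : conjCQ σ 0 = σ (AdjoinSimple.gen ℚ x) := rfl

lemma conjCQ_succ (n : ℕ) : conjCQ σ (n + 1) = (conjCQ σ n - cfDigit x n)⁻¹ := by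
  have : (⟨cq x (n + 1), cq_mem_adjoin x (n + 1)⟩ : ℚ⟮x⟯) =
      (⟨cq x n, cq_mem_adjoin x n⟩ - (cfDigit x n : ℚ⟮x⟯))⁻¹ := rfl
  rw [conjCQ, this, map_inv₀, map_sub, map_intCast]
  rfl

lemma conjCQ_eq_of_cq_eq {m n : ℕ} (h : cq x m = cq x n) : conjCQ σ m = conjCQ σ n := by
  simp only [conjCQ, h]

end Conjugate

lemma inv_mem_Ioo_of_lt_neg_one {y : ℝ} (hy : y < -1) : y⁻¹ ∈ Ioo (-1) 0 :=
  ⟨by simpa using (inv_lt_inv_of_neg (by norm_num) (by linarith)).2 hy, inv_lt_zero.2 (by linarith)⟩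

lemma one_lt_neg_inv {η : ℝ} (hη : η ∈ Ioo (-1) 0) : 1 < -η⁻¹ := by
  rw [← inv_neg, one_lt_inv₀ (by linarith [hη.2])]
  linarith [hη.1]

/- `(2x + p)² = p² - 4q` is a positive integer that is `≡ 0, 1 mod 4` and not a square, so it is
at least `5`. -/
lemma two_lt_two_mul_add {p q : ℤ} {x : ℝ} (hx : Irrational x)
    (hroot : x ^ 2 + p * x + q = 0) (hlt : -p - x < x) : 2 < 2 * x + p := by
  have hδ : (2 * x + p) ^ 2 = ((p ^ 2 - 4 * q : ℤ) : ℝ) := by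
    push_cast; linear_combination 4 * hroot
  have hδirr : Irrational (2 * x + p) := (hx.natCast_mul two_ne_zero).add_intCast p
  by_contra! hle
  have hD0 : 0 < p ^ 2 - 4 * q := by exact_mod_cast hδ ▸ (pow_pos (by linarith) 2 : (0 : ℝ) < _)
  have hD4 : p ^ 2 - 4 * q ≤ 4 := by
    have : (2 * x + p) ^ 2 ≤ 4 := by nlinarith
    exact_mod_cast hδ ▸ this
  have hD : p ^ 2 - 4 * q = 1 ∨ p ^ 2 - 4 * q = 4 := by
    rcases Int.even_or_odd' p with ⟨m, rfl | rfl⟩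
    · have : (2 * m) ^ 2 = 4 * (m * m) := by ring
      omega
    · have : (2 * m + 1) ^ 2 = 4 * (m * m + m) + 1 := by ring
      omega
  obtain ⟨r, hr⟩ : ∃ r : ℕ, p ^ 2 - 4 * q = r ^ 2 := by
    rcases hD with h | h
    · exact ⟨1, by rw [h]; norm_num⟩
    · exact ⟨2, by rw [h]; norm_num⟩
  refine hδirr.ne_nat r ((pow_left_inj₀ (by linarith) r.cast_nonneg two_ne_zero).1 ?_)
  rw [hδ, hr]
  push_cast; rfl

lemma conjCQ_succ_mem_Ioo {p q : ℤ} {x : ℝ} (hx : Irrational x)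
    (hroot : x ^ 2 + p * x + q = 0) (hlt : -p - x < x) (σ : ℚ⟮x⟯ →ₐ[ℚ] ℝ)
    (hσ : σ (AdjoinSimple.gen ℚ x) = -p - x) (n : ℕ) : conjCQ σ (n + 1) ∈ Ioo (-1) 0 := by
  rw [conjCQ_succ]
  refine inv_mem_Ioo_of_lt_neg_one ?_
  induction n with
  | zero =>
    have := Int.sub_one_lt_floor x
    have := two_lt_two_mul_add hx hroot hlt
    rw [conjCQ_zero, hσ, cfDigit, cq]
    linarith
  | succ n ih =>
    have hneg : conjCQ σ (n + 1) < 0 := by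
      rw [conjCQ_succ]; exact (inv_mem_Ioo_of_lt_neg_one ih).2
    have : (1 : ℝ) ≤ cfDigit x (n + 1) := mod_cast one_le_cfDigit hx n
    linarith

lemma isRotated_reverse_of_conj_lt {p q : ℤ} {x : ℝ} (hx : Irrational x)
    (hroot : x ^ 2 + p * x + q = 0) (hlt : -p - x < x) {b : List ℤ} (hb : IsCFPeriod x b) :
    b ~r b.reverse := by
  obtain ⟨σ, hσ⟩ := exists_algHom_adjoin_apply_gen (f := X ^ 2 + C (p : ℚ) * X + C (q : ℚ))
    (y := -p - x) (by monicity!) (by compute_degree!) hx (by simpa using hroot)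
    (by simp; linear_combination hroot)
  have hη := conjCQ_succ_mem_Ioo hx hroot hlt σ hσ
  -- `z` runs through the complete quotients of `x` backwards: see `cq_eq_of_backward_rec`.
  set z : ℕ → ℝ := fun n => -(conjCQ σ (n + 1))⁻¹
  have hz : ∀ n, 1 < z n := fun n => one_lt_neg_inv (hη n)
  have hrec : ∀ n, z (n + 1) = cfDigit x (n + 1) + (z n)⁻¹ := by
    intro n
    simp only [z, conjCQ_succ σ (n + 1), inv_neg, inv_inv]
    ring
  have hz0 : z 0 = (⌊x⌋ + p : ℤ) + x := by
    simp only [z, conjCQ_succ, conjCQ_zero, hσ, inv_inv]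
    push_cast
    rw [cfDigit, cq]
    ring
  obtain ⟨hne, N, hN⟩ := isCFPeriod_iff.1 (hb.of_cq_eq (y := cq x 1) (s := 0) (t := 1) rfl)
  have hd : ∀ i, cfDigit x (N + i + 1) = periodicExt b i := fun i => by
    rw [add_comm, cfDigit_add, hN]
  have hper : ∀ n, N ≤ n → z (n + b.length) = z n := by
    intro n hn
    have := cq_add_length_of_cfDigit hx (N := N + 1) (fun i => by rw [add_right_comm, hd])
      (by omega : N + 1 ≤ n + 1)
    simp only [z, add_right_comm n b.length 1, conjCQ_eq_of_cq_eq σ this]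
  have hrev := isCFPeriod_reverse_of_backward_rec hz hrec hne hd hper
  have hzN : cq (z N) N = z 0 := by simpa using cq_eq_of_backward_rec hz hrec 0 N
  have hfwd : IsCFPeriod (z N) b := hb.of_cq_eq (s := N + 1) (t := 1) (by
    rw [cq_add, hzN, hz0, cq_one_intCast_add])
  exact hfwd.isRotated hrev List.length_reverse.symm

/-- The period of the continued fraction of an irrational root of a monic
integer quadratic `x² + px + q = 0` is, as a cyclic sequence, a palindrome:
some cyclic rotation of it equals its own reversal. -/
theorem period_is_palindrome
    (p q : ℤ) (x : ℝ) (hirr : Irrational x)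
    (hroot : x ^ 2 + (p : ℝ) * x + (q : ℝ) = 0)
    (b : List ℤ) (hb : IsMinCFPeriod x b) :
    ∃ k : ℕ, b.reverse = b.rotate k := by
  suffices b ~r b.reverse from this.imp fun _ h => h.symm
  have hconj : -p - x ≠ x := fun h => hirr ⟨-p / 2, by push_cast; linarith⟩
  rcases hconj.lt_or_gt with hlt | hgt
  · exact isRotated_reverse_of_conj_lt hirr hroot hlt hb.1
  · obtain ⟨s, t, hst⟩ := exists_cq_neg_eq hirr
    exact isRotated_reverse_of_conj_lt (p := -p) (q := q) hirr.neg
      (by push_cast; linear_combination hroot) (by push_cast; linarith) (hb.1.of_cq_eq hst)
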